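/- arXiv:1603.00092 — 6 statements merged into one kernel-verified Lean document; each statement's English description precedes it below -/
import Mathlib

section
/- Let D_K be a K-IC structure on N vertices with inner vertex set V_I of size K ≥ 1, such that there is no directed cycle among the non-inner vertices (i.e., the subgraph induced on V(D_K) \ V_I is acyclic). Then removing any K−1 inner vertices from D_K yields an acyclic digraph; hence MAIS(D_K) ≥ N − K + 1. -/
open Finset
open scoped Classical

universe u

variable {V : Type u}

/-- `l` is a directed cycle: nonempty, distinct vertices, consecutive arcs, wrap-around arc. -/
def IsCycle (A : V → V → Prop) (l : List V) : Prop :=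
  l ≠ [] ∧ l.Nodup ∧ l.Chain' A ∧
    ∀ a b, l.getLast? = some a → l.head? = some b → A a b

/-- `l` is a directed path from `i` to `j`. -/
def IsPath (A : V → V → Prop) (l : List V) (i j : V) : Prop :=
  l.Nodup ∧ l.Chain' A ∧ l.head? = some i ∧ l.getLast? = some j

/-- An I-path w.r.t. inner vertex set `VI`: a path between two distinct inner vertices
whose interior vertices are all non-inner. -/
def IsIPath [DecidableEq V] (A : V → V → Prop) (VI : Finset V) (l : List V) (i j : V) : Prop :=
  IsPath A l i j ∧ i ∈ VI ∧ j ∈ VI ∧ i ≠ j ∧ ∀ v ∈ l.dropLast.drop 1, v ∉ VI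

/-- An I-cycle: a directed cycle containing exactly one inner vertex. -/
def IsICycle [DecidableEq V] (A : V → V → Prop) (VI : Finset V) (l : List V) : Prop :=
  IsCycle A l ∧ (l.toFinset ∩ VI).card = 1

/-- A K-IC structure: exactly one I-path between each ordered pair of distinct inner
vertices, and no I-cycle. -/
def IsKIC [DecidableEq V] (A : V → V → Prop) (VI : Finset V) : Prop :=
  (∀ i ∈ VI, ∀ j ∈ VI, i ≠ j → ∃! l : List V, IsIPath A VI l i j) ∧
  ∀ l : List V, ¬ IsICycle A VI l

/-- Out-degree of a vertex. -/
noncomputable def outDeg [Fintype V] (A : V → V → Prop) (v : V) : ℕ :=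
  (univ.filter fun w => A v w).card

/-- Minimum out-degree of a digraph. -/
noncomputable def minOutDeg [Fintype V] [Nonempty V] (A : V → V → Prop) : ℕ :=
  univ.inf' univ_nonempty (outDeg A)

/-- Out-degree of `v` within the subdigraph induced on `s`. -/
noncomputable def outDegOn (A : V → V → Prop) (s : Finset V) (v : V) : ℕ :=
  (s.filter fun w => A v w).card

/-- Minimum out-degree of the subdigraph induced on `s` (0 if `s` is empty). -/
noncomputable def minOutDegOn (A : V → V → Prop) (s : Finset V) : ℕ :=
  if h : s.Nonempty then s.inf' h (outDegOn A s) else 0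

/-- Induced arc relation on a vertex subset. -/
def inducedRel (A : V → V → Prop) (s : Finset V) : V → V → Prop :=
  fun u v => u ∈ s ∧ v ∈ s ∧ A u v

/-- A valid index code of length `p` for `t`-bit messages: the messages of every receiver
are determined by the codeword together with its side information (its out-neighbours'
messages). -/
def IsIndexCode [Fintype V] (A : V → V → Prop) (t p : ℕ)
    (F : (V → (Fin t → ZMod 2)) → (Fin p → ZMod 2)) : Prop :=
  ∀ x y : V → (Fin t → ZMod 2), F x = F y →
    ∀ i : V, (∀ q, A i q → x q = y q) → x i = y i

/-- No directed cycle lies entirely inside `s`. -/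
def AcyclicOn (A : V → V → Prop) (s : Finset V) : Prop :=
  ∀ l : List V, IsCycle A l → ¬ (∀ v ∈ l, v ∈ s)

/-- `s` (as a partial clique) is minimal: its savings `δ⁺` strictly exceed the total
savings of any partition of `s` into at least two parts. -/
def IsMinimalPC [DecidableEq V] (A : V → V → Prop) (s : Finset V) : Prop :=
  ∀ P : Finpartition s, 2 ≤ P.parts.card →
    ∑ p ∈ P.parts, minOutDegOn A p < minOutDegOn A s

/-- A directed rooted tree inside the digraph `A`, rooted at inner vertex `i`, whose
leaves are exactly the other inner vertices and whose internal vertices are non-inner. -/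
structure IsICTree [DecidableEq V] (A : V → V → Prop) (VI : Finset V) (i : V)
    (T : V → V → Prop) : Prop where
  sub : ∀ u v, T u v → A u v
  root_mem : i ∈ VI
  root_no_parent : ∀ u, ¬ T u i
  unique_parent : ∀ u u' v, T u v → T u' v → u = u'
  reach : ∀ j ∈ VI, j ≠ i → Relation.ReflTransGen T i j
  leaf : ∀ j ∈ VI, j ≠ i → ∀ w, ¬ T j w
  connected : ∀ u v, T u v → Relation.ReflTransGen T i u
  acyclic : ∀ v, ¬ Relation.TransGen T v v

/-- The Class-A digraph on `3*m` vertices (`K = 2*m` inner vertices `0,…,K-1`,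
outer vertices `K,…,3m-1`): outer vertex `K+i` has arcs to inner `2i` and `2i+1`;
inner `2i` and `2i+1` have mutual arcs and arcs to every outer vertex except `K+i`. -/
def classARel (m : ℕ) : Fin (3 * m) → Fin (3 * m) → Prop := fun u v =>
  (2 * m ≤ u.val ∧ v.val < 2 * m ∧ v.val / 2 = u.val - 2 * m) ∨
  (u.val < 2 * m ∧ v.val < 2 * m ∧ u.val / 2 = v.val / 2 ∧ u ≠ v) ∨
  (u.val < 2 * m ∧ 2 * m ≤ v.val ∧ v.val - 2 * m ≠ u.val / 2)

/-- In a K-IC structure whose non-inner part is acyclic, removing any K−1 inner vertices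
yields an acyclic digraph; hence MAIS ≥ N − K + 1. -/
theorem stmt4 {V : Type u} [Fintype V] [DecidableEq V] (A : V → V → Prop)
    (VI : Finset V) (K : ℕ) (hK : VI.card = K) (hK1 : 1 ≤ K)
    (hIC : IsKIC A VI) (hacyc : AcyclicOn A (univ \ VI)) :
    (∀ S ⊆ VI, S.card = K - 1 → AcyclicOn A (univ \ S)) ∧
    ∃ s : Finset V, s.card = Fintype.card V - K + 1 ∧ AcyclicOn A s := by
  have key : ∀ S ⊆ VI, S.card = K - 1 → AcyclicOn A (univ \ S) := by
    intro S hS hScard l hl hmem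
    have hcard1 : (VI \ S).card = 1 := by
      rw [Finset.card_sdiff_of_subset hS, hK, hScard]; omega
    have hTsub : l.toFinset ∩ VI ⊆ VI \ S := by
      intro v hv
      rcases Finset.mem_inter.mp hv with ⟨hvl, hvVI⟩
      have hvS := hmem v (List.mem_toFinset.mp hvl)
      rw [Finset.mem_sdiff] at hvS
      exact Finset.mem_sdiff.mpr ⟨hvVI, hvS.2⟩
    have hle : (l.toFinset ∩ VI).card ≤ 1 := hcard1 ▸ Finset.card_le_card hTsub
    interval_cases h : (l.toFinset ∩ VI).card
    · have hempty : l.toFinset ∩ VI = ∅ := Finset.card_eq_zero.mp h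
      refine hacyc l hl (fun v hv => ?_)
      rw [Finset.mem_sdiff]
      refine ⟨Finset.mem_univ _, fun hvVI => ?_⟩
      have : v ∈ l.toFinset ∩ VI := Finset.mem_inter.mpr ⟨List.mem_toFinset.mpr hv, hvVI⟩
      simp [hempty] at this
    · exact hIC.2 l ⟨hl, h⟩
  refine ⟨key, ?_⟩
  obtain ⟨S, hS, hScard⟩ := Finset.exists_subset_card_eq (show K - 1 ≤ VI.card by omega)
  refine ⟨univ \ S, ?_, key S hS hScard⟩
  rw [Finset.card_sdiff_of_subset (Finset.subset_univ _), Finset.card_univ, hScard]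
  have : K ≤ Fintype.card V := hK ▸ Finset.card_le_univ VI
  omega
end

section
/- Let D_K be a K-IC structure, and for each inner vertex i let T_i be a directed rooted tree in D_K with root i whose leaves are exactly the other inner vertices and whose internal non-root vertices are non-inner. If v is a non-inner vertex lying in both T_i and T_j (i ≠ j inner), then neither i nor j is a leaf descendant of v in the other tree; that is, the set of leaves of T_i below v is contained in V_I \ {i, j}. -/
open Finset
open scoped Classical

universe u

variable {V : Type u}

namespace Relation.ReflTransGen

variable {α : Type*} {r : α → α → Prop} {p : α → Prop} {a b : α}

theorem and_pred_left (h : ReflTransGen r a b) (ha : p a) (hp : ∀ u w, r u w → p w) :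
    ReflTransGen (fun u w => r u w ∧ p u) a b := by
  induction h using head_induction_on with
  | refl => rfl
  | head hac _ ih => exact head ⟨hac, ha⟩ (ih (hp _ _ hac))

end Relation.ReflTransGen

theorem List.exists_eq_append_cons_append_cons_of_not_nodup {α : Type*} {l : List α}
    (h : ¬ l.Nodup) : ∃ x p q s, l = p ++ x :: (q ++ x :: s) := by
  obtain ⟨x, hx⟩ := not_forall_not.mp (mt List.nodup_iff_sublist.mpr h)
  obtain ⟨r₁, r₂, rfl, hr₁, hr₂⟩ := List.cons_sublist_iff.mp hx
  obtain ⟨p, q, rfl⟩ := List.append_of_mem hr₁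
  obtain ⟨q', s, rfl⟩ := List.append_of_mem (List.singleton_sublist.mp hr₂)
  exact ⟨x, p, q ++ q', s, by simp⟩

namespace IsCycle

variable {R S : V → V → Prop} {l : List V}

theorem mono (hRS : ∀ a b, R a b → S a b) (hl : IsCycle R l) : IsCycle S l :=
  ⟨hl.1, hl.2.1, hl.2.2.1.imp fun a b => hRS a b, fun a b ha hb => hRS a b (hl.2.2.2 a b ha hb)⟩

theorem exists_rel_of_mem (hl : IsCycle R l) {x : V} (hx : x ∈ l) : ∃ y, R x y := by
  obtain ⟨s, t, rfl⟩ := List.append_of_mem hx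
  cases t with
  | nil =>
    obtain ⟨y, hy⟩ : ∃ y, (s ++ [x]).head? = some y := by cases s <;> simp
    exact ⟨y, hl.2.2.2 x y (by simp) hy⟩
  | cons y t => exact ⟨y, (List.isChain_append_cons_cons.mp hl.2.2.1).2.1⟩

end IsCycle

theorem exists_isCycle_of_isChain_cons {R : V → V → Prop} {a : V} (l : List V)
    (hl : (a :: l).IsChain R) (hlast : l.getLast? = some a) : ∃ c, IsCycle R c ∧ a ∈ c := by
  by_cases hnd : l.Nodup
  · refine ⟨l, ⟨?_, hnd, hl.tail, fun x y hx hy => ?_⟩, List.mem_of_getLast? hlast⟩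
    · rintro rfl; simp at hlast
    · obtain rfl : x = a := Option.some.inj (hx.symm.trans hlast)
      obtain ⟨t, rfl⟩ : ∃ t, l = y :: t := by
        cases l with
        | nil => simp at hy
        | cons z t => exact ⟨t, by simp_all⟩
      exact (List.isChain_cons_cons.mp hl).1
  · obtain ⟨x, p, q, s, rfl⟩ := List.exists_eq_append_cons_append_cons_of_not_nodup hnd
    have hshort : (a :: (p ++ x :: s)).IsChain R := by
      rw [List.isChain_cons_split] at hl ⊢
      exact ⟨hl.1, (List.isChain_cons_split.mp hl.2).2⟩
    refine exists_isCycle_of_isChain_cons (p ++ x :: s) hshort ?_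
    simpa [List.getLast?_append, List.getLast?_cons] using hlast
termination_by l.length
decreasing_by simp_all

theorem exists_isCycle_of_transGen {R : V → V → Prop} {a : V} (h : Relation.TransGen R a a) :
    ∃ c, IsCycle R c ∧ a ∈ c := by
  obtain ⟨b, hab, hba⟩ := Relation.TransGen.head'_iff.mp h
  obtain ⟨l, hl, hlast⟩ := List.exists_isChain_cons_of_relationReflTransGen hba
  exact exists_isCycle_of_isChain_cons (b :: l) (.cons_cons hab hl)
    (by rw [List.getLast?_eq_some_getLast (List.cons_ne_nil b l), hlast])

namespace IsICTree

variable [DecidableEq V] {A T : V → V → Prop} {VI : Finset V} {r u w : V}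

theorem eq_root_or_not_mem_of_rel (hT : IsICTree A VI r T) (h : T u w) : u = r ∨ u ∉ VI := by
  by_contra! hu
  exact hT.leaf u hu.2 hu.1 w h

theorem ne_root_of_reflTransGen (hT : IsICTree A VI r T) (hu : u ∉ VI)
    (h : Relation.ReflTransGen T u w) : w ≠ r := by
  rintro rfl
  rcases h.cases_tail with rfl | ⟨c, -, hc⟩
  · exact hu hT.root_mem
  · exact hT.root_no_parent c hc

end IsICTree

/-- Following `T_j` from `j` down to `v` and then `T_i` from `v` down to `j` is a closed walk
whose only inner vertex is `j`; it contains a cycle through `j`, which is an I-cycle. -/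
theorem IsICTree.ne_other_root_of_reflTransGen [DecidableEq V] {A Ti Tj : V → V → Prop}
    {VI : Finset V} {i j v w : V} (hA : ∀ l, ¬ IsICycle A VI l) (hTi : IsICTree A VI i Ti)
    (hTj : IsICTree A VI j Tj) (hv : v ∉ VI) (hjv : Relation.ReflTransGen Tj j v)
    (hvw : Relation.ReflTransGen Ti v w) : w ≠ j := by
  intro hwj
  subst w
  let R : V → V → Prop := fun u u' => A u u' ∧ (u = j ∨ u ∉ VI)
  have hjv' : Relation.TransGen R j v := by
    refine (Relation.reflTransGen_iff_eq_or_transGen.mp (Relation.ReflTransGen.mono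
      (fun u u' h => ⟨hTj.sub u u' h, hTj.eq_root_or_not_mem_of_rel h⟩) _ _ hjv)).resolve_left ?_
    rintro rfl
    exact hv hTj.root_mem
  have hvj' : Relation.ReflTransGen R v j := by
    have hvi : v ≠ i := by
      rintro rfl
      exact hv hTi.root_mem
    refine Relation.ReflTransGen.mono (fun u u' h => ?_) _ _
      (hvw.and_pred_left (p := (· ≠ i)) hvi fun u u' h => ?_)
    · exact ⟨hTi.sub u u' h.1, .inr ((hTi.eq_root_or_not_mem_of_rel h.1).resolve_left h.2)⟩
    · rintro rfl
      exact hTi.root_no_parent u h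
  obtain ⟨c, hc, hjc⟩ := exists_isCycle_of_transGen (hjv'.trans_left hvj')
  have hinner : c.toFinset ∩ VI = {j} := by
    ext x
    simp only [Finset.mem_inter, List.mem_toFinset, Finset.mem_singleton]
    refine ⟨fun ⟨hx, hxVI⟩ => ?_, by rintro rfl; exact ⟨hjc, hTj.root_mem⟩⟩
    obtain ⟨y, -, hx⟩ := hc.exists_rel_of_mem hx
    exact hx.resolve_right (not_not.mpr hxVI)
  exact hA c ⟨hc.mono fun _ _ h => h.1, by rw [hinner, Finset.card_singleton]⟩

theorem stmt7_general {V : Type u} [DecidableEq V] (A : V → V → Prop) (VI : Finset V)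
    (hIC : IsKIC A VI) (i j : V)
    (Ti Tj : V → V → Prop) (hTi : IsICTree A VI i Ti) (hTj : IsICTree A VI j Tj)
    (v : V) (hv : v ∉ VI)
    (hvTi : Relation.ReflTransGen Ti i v) (hvTj : Relation.ReflTransGen Tj j v) :
    (∀ w ∈ VI, Relation.ReflTransGen Ti v w → w ≠ i ∧ w ≠ j) ∧
    (∀ w ∈ VI, Relation.ReflTransGen Tj v w → w ≠ i ∧ w ≠ j) :=
  ⟨fun _ _ h => ⟨hTi.ne_root_of_reflTransGen hv h,
      hTi.ne_other_root_of_reflTransGen hIC.2 hTj hv hvTj h⟩,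
    fun _ _ h => ⟨hTj.ne_other_root_of_reflTransGen hIC.2 hTi hv hvTi h,
      hTj.ne_root_of_reflTransGen hv h⟩⟩

/-- If a non-inner vertex `v` lies in both trees `T_i` and `T_j` of a K-IC structure,
then the leaves below `v` (in either tree) avoid both `i` and `j`. -/
theorem stmt7 {V : Type u} [DecidableEq V] (A : V → V → Prop) (VI : Finset V)
    (hIC : IsKIC A VI) (i j : V) (hi : i ∈ VI) (hj : j ∈ VI) (hij : i ≠ j)
    (Ti Tj : V → V → Prop) (hTi : IsICTree A VI i Ti) (hTj : IsICTree A VI j Tj)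
    (v : V) (hv : v ∉ VI)
    (hvTi : Relation.ReflTransGen Ti i v) (hvTj : Relation.ReflTransGen Tj j v) :
    (∀ w ∈ VI, Relation.ReflTransGen Ti v w → w ≠ i ∧ w ≠ j) ∧
    (∀ w ∈ VI, Relation.ReflTransGen Tj v w → w ≠ i ∧ w ≠ j) :=
  stmt7_general A VI hIC i j Ti Tj hTi hTj v hv hvTi hvTj
end

section
/- For any digraph D and any message length t, MAIS(D) ≤ β_t(D): the number of vertices in a maximum acyclic induced subdigraph lower-bounds the optimal index code length. -/
open Finset
open scoped Classical

universe u

variable {V : Type u}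

section
variable {α β : Type*}

theorem exists_isPath_of_reflTransGen {r : α → α → Prop} {a b : α}
    (h : Relation.ReflTransGen r a b) : ∃ l, IsPath r l a b := by
  induction h using Relation.ReflTransGen.head_induction_on with
  | refl => exact ⟨[b], List.nodup_singleton b, List.isChain_singleton b, rfl, rfl⟩
  | @head a c hac _ ih =>
    obtain ⟨l, hnd, hch, hhead, hlast⟩ := ih
    have hl : l ≠ [] := by rintro rfl; simp at hhead
    by_cases ha : a ∈ l
    · -- shortcut the walk at the earlier visit of `a`
      obtain ⟨l₁, l₂, rfl⟩ := List.append_of_mem ha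
      refine ⟨a :: l₂, hnd.sublist (List.sublist_append_right _ _),
        hch.infix ⟨l₁, [], by simp⟩, rfl, ?_⟩
      simpa [List.getLast?_append] using hlast
    · obtain ⟨c', l, rfl⟩ := List.exists_cons_of_ne_nil hl
      obtain rfl : c' = c := by simpa using hhead
      exact ⟨a :: c' :: l, List.nodup_cons.mpr ⟨ha, hnd⟩, hch.cons_cons hac, rfl,
        by simpa using hlast⟩

theorem exists_isCycle_of_transGen_s11 {r : α → α → Prop} {a : α}
    (h : Relation.TransGen r a a) : ∃ l, IsCycle r l := by
  obtain ⟨b, hab, hba⟩ := Relation.TransGen.head'_iff.mp h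
  obtain ⟨l, hnd, hch, hhead, hlast⟩ := exists_isPath_of_reflTransGen hba
  refine ⟨l, by rintro rfl; simp at hhead, hnd, hch, ?_⟩
  intro x y hx hy
  rw [hlast, Option.some.injEq] at hx
  rw [hhead, Option.some.injEq] at hy
  exact hx ▸ hy ▸ hab

theorem IsCycle.map {r : β → β → Prop} {f : α → β} (hf : Function.Injective f) {l : List α}
    (h : IsCycle (fun a b => r (f a) (f b)) l) : IsCycle r (l.map f) := by
  obtain ⟨hne, hnd, hch, hwrap⟩ := h
  refine ⟨by simpa using hne, hnd.map hf, (List.isChain_map f).mpr hch, ?_⟩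
  intro x y hx hy
  obtain ⟨a, ha, rfl⟩ := Option.map_eq_some_iff.mp (List.getLast?_map ▸ hx)
  obtain ⟨b, hb, rfl⟩ := Option.map_eq_some_iff.mp (List.head?_map ▸ hy)
  exact hwrap a b ha hb

end

theorem AcyclicOn.wellFounded {A : V → V → Prop} {S : Finset V} (hS : AcyclicOn A S) :
    WellFounded (fun a b : S => A b a) := by
  let r : S → S → Prop := fun a b => A a b
  have hirr : ∀ a, ¬ Relation.TransGen r a a := fun a ha => by
    obtain ⟨l, hl⟩ := exists_isCycle_of_transGen_s11 ha
    exact hS _ (hl.map Subtype.val_injective) fun v hv => by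
      obtain ⟨w, -, rfl⟩ := List.mem_map.mp hv
      exact w.2
  have : IsTrans S (Function.swap (Relation.TransGen r)) := ⟨fun _ _ _ h₁ h₂ => h₂.trans h₁⟩
  have : Std.Irrefl (Function.swap (Relation.TransGen r)) := ⟨hirr⟩
  exact Subrelation.wf (r := Function.swap (Relation.TransGen r)) (fun h => .single h)
    (Finite.wellFounded_of_trans_of_irrefl _)

theorem IsIndexCode.eq_of_eqOn_compl_of_acyclicOn [Fintype V] {A : V → V → Prop} {t p : ℕ}
    {F : (V → (Fin t → ZMod 2)) → (Fin p → ZMod 2)} (hF : IsIndexCode A t p F)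
    {S : Finset V} (hS : AcyclicOn A S) {x y : V → Fin t → ZMod 2} (hxy : F x = F y)
    (hcompl : ∀ v ∉ S, x v = y v) : x = y := by
  -- decode the receivers of `S` in a topological order of the acyclic subdigraph
  have hS_eq : ∀ v : S, x v = y v := fun v => by
    induction v using hS.wellFounded.induction with
    | _ v ih =>
      refine hF x y hxy v fun q hq => ?_
      by_cases hqS : q ∈ S
      · exact ih ⟨q, hqS⟩ hq
      · exact hcompl q hqS
  funext v
  by_cases hv : v ∈ S
  · exact hS_eq ⟨v, hv⟩
  · exact hcompl v hv

theorem stmt11_general {V : Type u} [Fintype V] (A : V → V → Prop)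
    (t p : ℕ)
    (F : (V → (Fin t → ZMod 2)) → (Fin p → ZMod 2)) (hF : IsIndexCode A t p F)
    (S : Finset V) (hS : AcyclicOn A S) :
    S.card * t ≤ p := by
  let extend (g : S → Fin t → ZMod 2) : V → Fin t → ZMod 2 :=
    fun v => if hv : v ∈ S then g ⟨v, hv⟩ else 0
  have hinj : Function.Injective (F ∘ extend) := fun g h hgh => by
    have := hF.eq_of_eqOn_compl_of_acyclicOn hS hgh fun v hv => by simp [extend, hv]
    funext v
    simpa [extend] using congrFun this v
  have hcard := Fintype.card_le_of_injective _ hinj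
  simp only [Fintype.card_fun, Fintype.card_coe, ZMod.card, Fintype.card_fin, ← pow_mul]
    at hcard
  rwa [Nat.pow_le_pow_iff_right (by norm_num), mul_comm] at hcard

/-- MAIS lower bound: any vertex set inducing an acyclic subdigraph forces
`|S| · t ≤ p` for every valid index code; hence MAIS(D) ≤ β_t(D). -/
theorem stmt11 {V : Type u} [Fintype V] [DecidableEq V] (A : V → V → Prop)
    (t p : ℕ) (ht : 1 ≤ t)
    (F : (V → (Fin t → ZMod 2)) → (Fin p → ZMod 2)) (hF : IsIndexCode A t p F)
    (S : Finset V) (hS : AcyclicOn A S) :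
    S.card * t ≤ p :=
  stmt11_general A t p F hF S hS
end

section
/- Any minimal partial clique D' on at least 2 vertices with minimum out-degree δ⁺(D') = 1 is a directed cycle. -/
open Finset
open scoped Classical

universe u

variable {V : Type u}

/-!
With `δ⁺ = 1`, minimality means that no proper nonempty vertex set `s` induces a subdigraph of
minimum out-degree at least one: otherwise the partition `{s, sᶜ}` would already save `1`.
Choose an out-neighbour `f v` of every vertex. The forward `f`-orbit of any vertex is such a
set, hence everything, so `f` is a cyclic permutation of period `n = |V|`. For an arc `u → v`,
the `f`-path from `v` to `u` closed up by this arc is again such a set, so it has `n` vertices,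
which forces `v = f u`.
-/

open Function

variable {α : Type*}

def IsOutClosed (R : α → α → Prop) (s : Finset α) : Prop :=
  ∀ v ∈ s, ∃ w ∈ s, R v w

def NoProperOutClosed [Fintype α] (R : α → α → Prop) : Prop :=
  ∀ s : Finset α, s.Nonempty → IsOutClosed R s → s = univ

def CyclicAdj (l : List α) (u v : α) : Prop :=
  [u, v] <:+: l ∨ (l.getLast? = some u ∧ l.head? = some v)

theorem one_le_minOutDegOn_iff {R : α → α → Prop} {s : Finset α} (hs : s.Nonempty) :
    1 ≤ minOutDegOn R s ↔ IsOutClosed R s := by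
  simp only [minOutDegOn, dif_pos hs, Finset.le_inf'_iff, outDegOn, Finset.one_le_card,
    Finset.filter_nonempty_iff, IsOutClosed]

namespace IsMinimalPC

variable [DecidableEq α] {R : α → α → Prop} {s t : Finset α}

theorem minOutDegOn_add_lt (h : IsMinimalPC R t) (hst : s ⊂ t) (hs : s.Nonempty) :
    minOutDegOn R s + minOutDegOn R (t \ s) < minOutDegOn R t := by
  have hts : (t \ s).Nonempty := sdiff_nonempty.2 hst.not_subset
  let P := (Finpartition.indiscrete hs.ne_empty).extend hts.ne_empty disjoint_sdiff_self_right
    (union_sdiff_of_subset hst.subset)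
  have hne : t \ s ≠ s := by
    intro h
    have hdisj : Disjoint (t \ s) s := sdiff_disjoint
    rw [h, disjoint_self] at hdisj
    exact hs.ne_empty hdisj
  have hP := h P (by simp [P, card_pair hne])
  simpa [P, sum_pair hne, add_comm] using hP

theorem eq_of_isOutClosed (h : IsMinimalPC R t) (ht : minOutDegOn R t ≤ 1) (hst : s ⊆ t)
    (hs : s.Nonempty) (hcl : IsOutClosed R s) : s = t := by
  by_contra hne
  have hlt := h.minOutDegOn_add_lt (hst.ssubset_of_ne hne) hs
  have hle := (one_le_minOutDegOn_iff hs).2 hcl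
  omega

end IsMinimalPC

namespace NoProperOutClosed

variable [Fintype α] {R : α → α → Prop} {f : α → α}

theorem exists_iterate_eq (hR : NoProperOutClosed R) (hf : ∀ v, R v (f v)) (x y : α) :
    ∃ n, f^[n] x = y := by
  have hcl : IsOutClosed R (univ.filter fun y => ∃ n, f^[n] x = y) := by
    rintro _ hy
    obtain ⟨n, rfl⟩ := (mem_filter.1 hy).2
    exact ⟨f (f^[n] x), mem_filter.2 ⟨mem_univ _, n + 1, iterate_succ_apply' f n x⟩, hf _⟩
  have horbit := hR _ ⟨x, mem_filter.2 ⟨mem_univ x, 0, rfl⟩⟩ hcl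
  have hy : y ∈ univ.filter fun y => ∃ n, f^[n] x = y := by
    rw [horbit]
    exact mem_univ y
  exact (mem_filter.1 hy).2

theorem mem_periodicPts (hR : NoProperOutClosed R) (hf : ∀ v, R v (f v)) (x : α) :
    x ∈ periodicPts f := by
  obtain ⟨n, hn⟩ := hR.exists_iterate_eq hf (f x) x
  exact mk_mem_periodicPts n.succ_pos (by rwa [IsPeriodicPt, IsFixedPt, iterate_succ_apply])

theorem card_le_of_adj_iterate (hR : NoProperOutClosed R) (hf : ∀ v, R v (f v)) {x : α}
    {k : ℕ} (hk : R (f^[k] x) x) : Fintype.card α ≤ k + 1 := by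
  set s := (range (k + 1)).image fun n => f^[n] x
  have hcl : IsOutClosed R s := by
    intro v hv
    obtain ⟨n, hn, rfl⟩ := mem_image.1 hv
    rcases Nat.lt_succ_iff_lt_or_eq.1 (mem_range.1 hn) with hn | rfl
    · refine ⟨f^[n + 1] x, mem_image_of_mem _ (mem_range.2 (by omega)), ?_⟩
      exact (iterate_succ_apply' f n x).symm ▸ hf _
    · exact ⟨x, mem_image_of_mem _ (mem_range.2 n.succ_pos), hk⟩
  have hs := hR s ⟨x, mem_image_of_mem _ (mem_range.2 k.succ_pos)⟩ hcl
  calc Fintype.card α = #s := by rw [hs, card_univ]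
    _ ≤ #(range (k + 1)) := card_image_le
    _ = k + 1 := card_range _

theorem minimalPeriod_eq_card (hR : NoProperOutClosed R) (hf : ∀ v, R v (f v)) (x : α) :
    minimalPeriod f x = Fintype.card α := by
  refine minimalPeriod_le_card.antisymm ?_
  obtain ⟨k, hk⟩ := Nat.exists_eq_succ_of_ne_zero
    (minimalPeriod_pos_of_mem_periodicPts (hR.mem_periodicPts hf x)).ne'
  have hx : f (f^[k] x) = x := by rw [← iterate_succ_apply' f, ← hk, iterate_minimalPeriod]
  exact hk ▸ hR.card_le_of_adj_iterate hf (hx ▸ hf (f^[k] x))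

theorem eq_apply_of_adj (hR : NoProperOutClosed R) (hf : ∀ v, R v (f v)) {u v : α}
    (huv : R u v) : v = f u := by
  obtain ⟨n, rfl⟩ := hR.exists_iterate_eq hf v u
  have hp := hR.minimalPeriod_eq_card hf v
  have hk : f^[n % minimalPeriod f v] v = f^[n] v := iterate_mod_minimalPeriod_eq
  have hlt : n % minimalPeriod f v < minimalPeriod f v :=
    Nat.mod_lt _ (minimalPeriod_pos_of_mem_periodicPts (hR.mem_periodicPts hf v))
  have hle := hR.card_le_of_adj_iterate hf (hk ▸ huv)
  have hsucc : n % minimalPeriod f v + 1 = minimalPeriod f v := by omega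
  have hv := iterate_succ_apply' f (n % minimalPeriod f v) v
  rw [Nat.succ_eq_add_one, hsucc, iterate_minimalPeriod, hk] at hv
  exact hv

theorem adj_iff_eq_apply (hR : NoProperOutClosed R) (hf : ∀ v, R v (f v)) {u v : α} :
    R u v ↔ v = f u :=
  ⟨hR.eq_apply_of_adj hf, fun h => h ▸ hf u⟩

end NoProperOutClosed

theorem List.getElem_pair_infix (l : List α) (i : ℕ) (h : i + 1 < l.length) :
    [l[i], l[i + 1]] <:+: l :=
  List.infix_iff_getElem?.2 ⟨i, by simp; omega, fun j hj => by grind⟩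

noncomputable def orbitList (f : α → α) (x : α) : List α :=
  (List.range (minimalPeriod f x)).map fun n => f^[n] x

section OrbitList

variable {f : α → α} {x : α}

theorem nodup_orbitList : (orbitList f x).Nodup :=
  Cycle.nodup_coe_iff.1 nodup_periodicOrbit

theorem mem_orbitList_iff (hx : x ∈ periodicPts f) {y : α} :
    y ∈ orbitList f x ↔ ∃ n, f^[n] x = y :=
  Cycle.mem_coe_iff.symm.trans (mem_periodicOrbit_iff hx)

theorem cyclicAdj_orbitList_iff (hx : x ∈ periodicPts f) {u v : α} (hu : u ∈ orbitList f x) :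
    CyclicAdj (orbitList f x) u v ↔ v = f u := by
  obtain ⟨p, hp⟩ := Nat.exists_eq_succ_of_ne_zero (minimalPeriod_pos_of_mem_periodicPts hx).ne'
  have hL : orbitList f x = (List.range (p + 1)).map fun n => f^[n] x := by rw [orbitList, hp]
  have hwrap : f (f^[p] x) = x := by rw [← iterate_succ_apply' f, ← hp, iterate_minimalPeriod]
  have hlast : (orbitList f x).getLast? = some (f^[p] x) := by simp [hL, List.range_succ]
  have hhead : (orbitList f x).head? = some x := by simp [hL, List.range_succ_eq_map]
  constructor
  · rintro (h | ⟨hlastu, hheadv⟩)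
    · have hchain : (orbitList f x).IsChain (fun a b => b = f a) := by
        rw [hL, List.isChain_map, List.isChain_range_succ]
        exact fun m _ => iterate_succ_apply' f m x
      simpa using hchain.infix h
    · rw [hlast, Option.some_inj] at hlastu
      rw [hhead, Option.some_inj] at hheadv
      rw [← hlastu, ← hheadv, hwrap]
  · rintro rfl
    obtain ⟨t, ht, rfl⟩ := List.mem_map.1 (hL ▸ hu)
    rcases Nat.lt_succ_iff_lt_or_eq.1 (List.mem_range.1 ht) with ht | rfl
    · have hpair := List.getElem_pair_infix ((List.range (p + 1)).map fun n => f^[n] x) t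
        (by simpa using ht)
      simp only [List.getElem_map, List.getElem_range] at hpair
      left
      rwa [hL, ← iterate_succ_apply' f t x]
    · exact Or.inr ⟨hlast, by rw [hhead, hwrap]⟩

end OrbitList

theorem stmt14_general {V : Type u} [Fintype V] [DecidableEq V]
    (A : V → V → Prop)
    (hmin : IsMinimalPC A (univ : Finset V))
    (hδ : minOutDegOn A (univ : Finset V) = 1) :
    ∃ l : List V, l.Nodup ∧ l.toFinset = (univ : Finset V) ∧
      ∀ u v : V, A u v ↔
        ([u, v] <:+: l ∨ (l.getLast? = some u ∧ l.head? = some v)) := by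
  have hne : (univ : Finset V).Nonempty := by
    by_contra h
    simp [minOutDegOn, h] at hδ
  obtain ⟨w⟩ := hne.to_type
  obtain ⟨f, hf⟩ : ∃ f : V → V, ∀ v, A v (f v) := by
    choose f _ hf using fun v => (one_le_minOutDegOn_iff hne).1 hδ.ge v (mem_univ v)
    exact ⟨f, hf⟩
  have hR : NoProperOutClosed A :=
    fun s hs hcl => hmin.eq_of_isOutClosed hδ.le (subset_univ s) hs hcl
  have hw := hR.mem_periodicPts hf w
  have hmem (y : V) : y ∈ orbitList f w := (mem_orbitList_iff hw).2 (hR.exists_iterate_eq hf w y)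
  refine ⟨orbitList f w, nodup_orbitList, eq_univ_of_forall fun y => List.mem_toFinset.2 (hmem y),
    fun u v => ?_⟩
  rw [hR.adj_iff_eq_apply hf]
  exact (cyclicAdj_orbitList_iff hw (hmem u)).symm

/-- A minimal partial clique on at least two vertices with minimum out-degree 1 is a
single directed cycle through all its vertices. -/
theorem stmt14 {V : Type u} [Fintype V] [DecidableEq V] [Nonempty V]
    (A : V → V → Prop) (h2 : 2 ≤ Fintype.card V)
    (hmin : IsMinimalPC A (univ : Finset V))
    (hδ : minOutDegOn A (univ : Finset V) = 1) :
    ∃ l : List V, l.Nodup ∧ l.toFinset = (univ : Finset V) ∧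
      ∀ u v : V, A u v ↔
        ([u, v] <:+: l ∨ (l.getLast? = some u ∧ l.head? = some v)) :=
  stmt14_general A hmin hδ
end

section
/- For even K ≥ 2, define the Class-A digraph D on N = 3K/2 vertices: for each i in {1,...,K/2}, vertex K+i has arcs to vertices 2i−1 and 2i; vertices 2i−1 and 2i have arcs to each other and each has an arc to every vertex in {K+1,...,3K/2} \ {K+i}. Then D is a K-IC structure with inner vertex set {1,...,K}: between every ordered pair of distinct inner vertices there is exactly one I-path, and D has no I-cycle. -/
/-!
Outer (non-inner) vertices only have arcs into inner vertices. Hence an I-path has at most one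
interior vertex, and an I-cycle, having a single inner vertex `x`, is a 2-cycle `x → w → x`
through an outer `w`. In the Class-A digraph the outer vertex `K + k` lies on a path `u → w → v`
between inner vertices exactly when `v` belongs to the pair `k` and `u` does not. So the two
vertices of a pair are joined only by their direct arc, any other two inner vertices only by the
detour through the outer vertex of the target's pair, and no 2-cycle through an outer vertex
exists.
-/

open Finset
open scoped Classical

universe u

variable {V : Type u}

theorem chain'_iff_isChain {A : V → V → Prop} {l : List V} : l.Chain' A ↔ l.IsChain A := Iff.rfl

section InnerPaths

variable [DecidableEq V] {A : V → V → Prop} {VI : Finset V} {l : List V} {i j w : V}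

theorem isIPath_pair_iff :
    IsIPath A VI [i, j] i j ↔ i ∈ VI ∧ j ∈ VI ∧ i ≠ j ∧ A i j := by
  simp only [IsIPath, IsPath, chain'_iff_isChain]
  grind

theorem isIPath_triple_iff :
    IsIPath A VI [i, w, j] i j ↔ i ∈ VI ∧ j ∈ VI ∧ i ≠ j ∧ w ∉ VI ∧ A i w ∧ A w j := by
  simp only [IsIPath, IsPath, chain'_iff_isChain]
  grind

theorem IsIPath.eq_pair_or_triple (hA : ∀ u v, A u v → u ∈ VI ∨ v ∈ VI)
    (h : IsIPath A VI l i j) : l = [i, j] ∨ ∃ w, l = [i, w, j] := by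
  obtain ⟨⟨-, hchain, hhead, hlast⟩, -, -, hij, hinterior⟩ := h
  match l, hhead, hlast with
  | [a], hhead, hlast => simp_all
  | [a, b], hhead, hlast => simp_all
  | [a, b, c], hhead, hlast => simp_all
  | a :: b :: c :: d :: t, _, _ =>
    have hb : b ∉ VI := hinterior b (by simp [List.dropLast_cons_cons])
    have hc : c ∉ VI := hinterior c (by simp [List.dropLast_cons_cons])
    have hbc : A b c := (chain'_iff_isChain.mp hchain).tail.rel
    exact absurd (hA b c hbc) (by tauto)

theorem existsUnique_isIPath_of_arc (hA : ∀ u v, A u v → u ∈ VI ∨ v ∈ VI)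
    (hi : i ∈ VI) (hj : j ∈ VI) (hij : i ≠ j) (harc : A i j)
    (hno : ∀ w ∉ VI, A i w → ¬ A w j) : ∃! l, IsIPath A VI l i j := by
  refine ⟨[i, j], isIPath_pair_iff.mpr ⟨hi, hj, hij, harc⟩, fun l hl => ?_⟩
  obtain rfl | ⟨w, rfl⟩ := hl.eq_pair_or_triple hA
  · rfl
  · obtain ⟨-, -, -, hw, hiw, hwj⟩ := isIPath_triple_iff.mp hl
    exact absurd hwj (hno w hw hiw)

theorem existsUnique_isIPath_of_not_arc (hA : ∀ u v, A u v → u ∈ VI ∨ v ∈ VI)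
    (hi : i ∈ VI) (hj : j ∈ VI) (hij : i ≠ j)
    (harc : ¬ A i j) (hw : w ∉ VI) (hthrough : ∀ w' ∉ VI, A i w' ∧ A w' j ↔ w' = w) :
    ∃! l, IsIPath A VI l i j := by
  obtain ⟨hiw, hwj⟩ := (hthrough w hw).mpr rfl
  refine ⟨[i, w, j], isIPath_triple_iff.mpr ⟨hi, hj, hij, hw, hiw, hwj⟩, fun l hl => ?_⟩
  obtain rfl | ⟨w', rfl⟩ := hl.eq_pair_or_triple hA
  · exact absurd (isIPath_pair_iff.mp hl).2.2.2 harc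
  · obtain ⟨-, -, -, hw', hiw', hw'j⟩ := isIPath_triple_iff.mp hl
    rw [(hthrough w' hw').mp ⟨hiw', hw'j⟩]

theorem IsICycle.exists_two_cycle (hA : ∀ u v, A u v → u ∈ VI ∨ v ∈ VI)
    (hirr : ∀ v, ¬ A v v) (h : IsICycle A VI l) :
    ∃ x ∈ VI, ∃ w ∉ VI, A x w ∧ A w x := by
  obtain ⟨⟨hne, hnd, hchain, hwrap⟩, hcard⟩ := h
  obtain ⟨x, hx⟩ := Finset.card_eq_one.mp hcard
  have hunique : ∀ y ∈ l, y ∈ VI → y = x := fun y hy hyI =>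
    Finset.mem_singleton.mp (hx ▸ Finset.mem_inter.mpr ⟨List.mem_toFinset.mpr hy, hyI⟩)
  replace hchain := chain'_iff_isChain.mp hchain
  match l with
  | [] => exact absurd rfl hne
  | [a] => exact absurd (hwrap a a rfl rfl) (hirr a)
  | [a, b] =>
    have hab : a ≠ b := by simpa using hnd
    have hab' : A a b := List.isChain_pair.mp hchain
    have hba : A b a := hwrap b a rfl rfl
    by_cases ha : a ∈ VI
    · refine ⟨a, ha, b, fun hb => hab ?_, hab', hba⟩
      rw [hunique a (by simp) ha, hunique b (by simp) hb]
    · exact ⟨b, (hA a b hab').resolve_left ha, a, ha, hba, hab'⟩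
  | a :: b :: c :: t =>
    exfalso
    have hab : A a b := hchain.rel
    have hbc : A b c := hchain.tail.rel
    obtain ⟨ha_notMem, hb_notMem, -⟩ : a ∉ b :: c :: t ∧ b ∉ c :: t ∧ _ := by
      simpa only [List.nodup_cons] using hnd
    by_cases ha : a ∈ VI
    · have outer : ∀ y ∈ b :: c :: t, y ∉ VI := fun y hy hyI =>
        ha_notMem (hunique a (by simp) ha ▸ hunique y (List.mem_cons_of_mem a hy) hyI ▸ hy)
      exact (hA b c hbc).elim (outer b (by simp)) (outer c (by simp))
    · have hb : b ∈ VI := (hA a b hab).resolve_left ha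
      set z := (c :: t).getLast (List.cons_ne_nil c t)
      have hz : z ∈ c :: t := List.getLast_mem _
      have hza : A z a := hwrap z a (by simp [z, List.getLast?_eq_some_getLast]) rfl
      have hzI : z ∉ VI := fun hzI =>
        hb_notMem (hunique b (by simp) hb ▸ hunique z (by simp [hz]) hzI ▸ hz)
      exact (hA z a hza).elim hzI ha

end InnerPaths

section ClassA

variable {m : ℕ} {u v w : Fin (3 * m)}

theorem classARel_irrefl (v : Fin (3 * m)) : ¬ classARel m v v := by
  simp only [classARel]
  omega

theorem classARel_inner_or_inner (h : classARel m u v) : u.val < 2 * m ∨ v.val < 2 * m := by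
  simp only [classARel] at h
  omega

theorem classARel_iff_of_inner (hu : u.val < 2 * m) (hv : v.val < 2 * m) :
    classARel m u v ↔ u.val / 2 = v.val / 2 ∧ u ≠ v := by
  simp only [classARel, ne_eq, Fin.ext_iff]
  omega

theorem classARel_through_outer_iff (hu : u.val < 2 * m) (hw : 2 * m ≤ w.val) :
    classARel m u w ∧ classARel m w v ↔
      v.val < 2 * m ∧ w.val = 2 * m + v.val / 2 ∧ u.val / 2 ≠ v.val / 2 := by
  simp only [classARel]
  omega

theorem classARel_isKIC (m : ℕ) :
    IsKIC (classARel m) ((univ : Finset (Fin (3 * m))).filter fun v => v.val < 2 * m) := by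
  have hA : ∀ u v : Fin (3 * m), classARel m u v →
      u ∈ univ.filter (fun v : Fin (3 * m) => v.val < 2 * m) ∨
      v ∈ univ.filter (fun v : Fin (3 * m) => v.val < 2 * m) :=
    fun u v h => by simpa using classARel_inner_or_inner h
  refine ⟨fun i hi j hj hij => ?_, fun l hl => ?_⟩
  · have hi' : i.val < 2 * m := by simpa using hi
    have hj' : j.val < 2 * m := by simpa using hj
    by_cases hpair : i.val / 2 = j.val / 2
    · refine existsUnique_isIPath_of_arc hA hi hj hij
        ((classARel_iff_of_inner hi' hj').mpr ⟨hpair, hij⟩) fun w hw hiw hwj => ?_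
      simp only [mem_filter, mem_univ, true_and, not_lt] at hw
      exact ((classARel_through_outer_iff hi' hw).mp ⟨hiw, hwj⟩).2.2 hpair
    · refine existsUnique_isIPath_of_not_arc (w := ⟨2 * m + j.val / 2, by omega⟩) hA hi hj hij
        (fun h => hpair ((classARel_iff_of_inner hi' hj').mp h).1) (by simp) fun w hw => ?_
      simp only [mem_filter, mem_univ, true_and, not_lt] at hw
      rw [classARel_through_outer_iff hi' hw, Fin.ext_iff]
      exact ⟨fun h => h.2.1, fun h => ⟨hj', h, hpair⟩⟩
  · obtain ⟨x, hx, w, hw, hxw, hwx⟩ := hl.exists_two_cycle hA classARel_irrefl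
    simp only [mem_filter, mem_univ, true_and, not_lt] at hx hw
    exact ((classARel_through_outer_iff hx hw).mp ⟨hxw, hwx⟩).2.2 rfl

end ClassA

theorem stmt17_general (K m : ℕ) (hm : K = 2 * m) :
    ((univ : Finset (Fin (3 * m))).filter fun v => v.val < K).card = K ∧
    IsKIC (classARel m)
      ((univ : Finset (Fin (3 * m))).filter fun v => v.val < K) := by
  subst hm
  refine ⟨?_, classARel_isKIC m⟩
  rw [Fin.card_filter_val_lt]
  omega

/-- The Class-A digraph on N = 3K/2 vertices (K = 2m even, K ≥ 2) is a K-IC structure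
with inner vertex set the K vertices {0,…,K−1}. -/
theorem stmt17 (K m : ℕ) (hm : K = 2 * m) (hK : 2 ≤ K) :
    ((univ : Finset (Fin (3 * m))).filter fun v => v.val < K).card = K ∧
    IsKIC (classARel m)
      ((univ : Finset (Fin (3 * m))).filter fun v => v.val < K) :=
  stmt17_general K m hm
end

section
/- In the Class-A digraph D on N = 3K/2 vertices (K ≥ 4 even), every minimal partial clique has minimum out-degree at most 2, and no minimal partial clique has minimum out-degree exactly 2; hence all minimal partial cliques in D are directed cycles or single vertices, and the partial-clique number satisfies ℓ_PC(D) ≥ K. -/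
open Finset
open scoped Classical

universe u

variable {V : Type u}

/-!
If `s` is a minimal partial clique with `δ⁺(s) ≤ 1`, no nonempty proper subset `t` of `s` has
positive savings, since `{t, s \ t}` would be at least as good a partition. So for any choice
`f` of an out-neighbour inside `s`, every forward `f`-orbit is all of `s`: `f` is a cyclic
permutation of `s`. An arc `u → w` with `w ≠ f u` would give another such choice, `f` redirected
at `u`, which is not injective. Thus `s` is a chordless directed cycle.

In the Class-A digraph group the vertices into blocks `{2i, 2i+1, K+i}`: arcs inside a block go
to its inner vertices, arcs between blocks go from an inner to an outer vertex. Savings `2` force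
two outer vertices in different blocks, each with both inner vertices of its block; these two
inner 2-cycles together with the rest of `s` form a partition with savings at least `1 + 1`,
contradicting minimality. For the bound on `ℓ_PC`, a part of savings `δ` contains two vertices of
at least `δ` blocks; a block has only three vertices, so no two parts do this for the same block,
and the total savings are at most `m = K/2` out of `3m` vertices.
-/

section MinOutDeg

variable {A : V → V → Prop} {s : Finset V} {v : V} {n : ℕ}

lemma minOutDegOn_le_outDegOn (hv : v ∈ s) : minOutDegOn A s ≤ outDegOn A s v := by
  rw [minOutDegOn, dif_pos ⟨v, hv⟩]
  exact inf'_le _ hv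

lemma le_minOutDegOn (hs : s.Nonempty) (H : ∀ v ∈ s, n ≤ outDegOn A s v) :
    n ≤ minOutDegOn A s := by
  rw [minOutDegOn, dif_pos hs]
  exact le_inf' _ _ H

lemma minOutDegOn_empty : minOutDegOn A ∅ = 0 := by
  simp [minOutDegOn]

lemma nonempty_of_minOutDegOn_ne_zero (h : minOutDegOn A s ≠ 0) : s.Nonempty := by
  by_contra hs
  rw [not_nonempty_iff_eq_empty.mp hs, minOutDegOn_empty] at h
  exact h rfl

lemma minOutDegOn_le_card (A : V → V → Prop) (s : Finset V) : minOutDegOn A s ≤ #s := by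
  rcases s.eq_empty_or_nonempty with rfl | ⟨v, hv⟩
  · simp [minOutDegOn_empty]
  · exact (minOutDegOn_le_outDegOn hv).trans (card_filter_le _ _)

lemma one_le_minOutDegOn_iff_s18 (hs : s.Nonempty) :
    1 ≤ minOutDegOn A s ↔ ∀ v ∈ s, ∃ w ∈ s, A v w := by
  refine ⟨fun h v hv => ?_, fun H => le_minOutDegOn hs fun v hv => ?_⟩
  · obtain ⟨w, hw⟩ := card_pos.mp (h.trans (minOutDegOn_le_outDegOn hv))
    exact ⟨w, (mem_filter.mp hw).1, (mem_filter.mp hw).2⟩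
  · obtain ⟨w, hw, hvw⟩ := H v hv
    exact card_pos.mpr ⟨w, mem_filter.mpr ⟨hw, hvw⟩⟩

lemma exists_arc_of_one_le_minOutDegOn (h : 1 ≤ minOutDegOn A s) (hv : v ∈ s) :
    ∃ w ∈ s, A v w :=
  (one_le_minOutDegOn_iff_s18 ⟨v, hv⟩).mp h v hv

end MinOutDeg

namespace IsMinimalPC

variable [DecidableEq V] {A : V → V → Prop} {s t t₁ t₂ : Finset V}

lemma sum_lt_of_subset (hmin : IsMinimalPC A s) (Q : Finpartition t) (hts : t ⊆ s)
    (hQ : 2 ≤ #Q.parts) : ∑ p ∈ Q.parts, minOutDegOn A p < minOutDegOn A s := by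
  rcases hts.eq_or_ssubset with rfl | hlt
  · exact hmin Q hQ
  have hrest : s \ t ≠ ⊥ := (sdiff_nonempty.mpr (not_subset_of_ssubset hlt)).ne_empty
  let P : Finpartition s := Q.extend hrest disjoint_sdiff (union_sdiff_of_subset hts)
  have hP : P.parts = insert (s \ t) Q.parts := rfl
  have hnot : s \ t ∉ Q.parts := fun h =>
    (Q.ne_bot h) (disjoint_self.mp ((disjoint_sdiff.mono_left (Q.le h))))
  calc ∑ p ∈ Q.parts, minOutDegOn A p
      ≤ ∑ p ∈ P.parts, minOutDegOn A p := by
        rw [hP, sum_insert hnot]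
        exact Nat.le_add_left _ _
    _ < minOutDegOn A s := hmin P (by rw [Finpartition.card_extend]; omega)

lemma add_lt (hmin : IsMinimalPC A s) (h₁ : t₁.Nonempty) (h₂ : t₂.Nonempty)
    (hd : Disjoint t₁ t₂) (hs₁ : t₁ ⊆ s) (hs₂ : t₂ ⊆ s) :
    minOutDegOn A t₁ + minOutDegOn A t₂ < minOutDegOn A s := by
  let Q : Finpartition (t₁ ∪ t₂) :=
    (Finpartition.indiscrete h₁.ne_empty).extend h₂.ne_empty hd rfl
  have hne : t₂ ≠ t₁ := fun h => h₁.ne_empty (disjoint_self.mp (h ▸ hd))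
  have hQ : Q.parts = {t₂, t₁} := rfl
  have := hmin.sum_lt_of_subset Q (union_subset hs₁ hs₂)
    (by rw [hQ, card_pair hne])
  rwa [hQ, sum_pair hne, add_comm] at this

lemma one_le_minOutDegOn (hmin : IsMinimalPC A s) (hs : 1 < #s) : 1 ≤ minOutDegOn A s := by
  obtain ⟨v, hv, w, hw, hvw⟩ := one_lt_card.mp hs
  have hw' : w ∈ s \ {v} := mem_sdiff.mpr ⟨hw, by simpa using hvw.symm⟩
  have := hmin.add_lt (singleton_nonempty v) ⟨w, hw'⟩ disjoint_sdiff
    (singleton_subset_iff.mpr hv) sdiff_subset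
  omega

lemma minOutDegOn_eq_zero_of_ssubset (hmin : IsMinimalPC A s) (hδ : minOutDegOn A s ≤ 1)
    (hts : t ⊂ s) : minOutDegOn A t = 0 := by
  rcases t.eq_empty_or_nonempty with rfl | ht
  · exact minOutDegOn_empty
  have := hmin.add_lt ht (sdiff_nonempty.mpr (not_subset_of_ssubset hts)) disjoint_sdiff
    hts.subset sdiff_subset
  omega

end IsMinimalPC

def IsSuccOn (A : V → V → Prop) (s : Finset V) (f : V → V) : Prop :=
  ∀ v ∈ s, f v ∈ s ∧ A v (f v)

namespace IsSuccOn

variable {A : V → V → Prop} {s : Finset V} {f : V → V} {u v w : V}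

lemma exists_of_one_le_minOutDegOn (h : 1 ≤ minOutDegOn A s) : ∃ f, IsSuccOn A s f := by
  have H : ∀ v, ∃ w, v ∈ s → w ∈ s ∧ A v w := fun v => by
    by_cases hv : v ∈ s
    · obtain ⟨w, hw⟩ := exists_arc_of_one_le_minOutDegOn h hv
      exact ⟨w, fun _ => hw⟩
    · exact ⟨v, fun h => absurd h hv⟩
  choose f hf using H
  exact ⟨f, fun v hv => hf v hv⟩

lemma iterate_mem (hf : IsSuccOn A s f) (hv : v ∈ s) (n : ℕ) : f^[n] v ∈ s := by
  induction n with
  | zero => exact hv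
  | succ n ih => rw [Function.iterate_succ_apply']; exact (hf _ ih).1

lemma update [DecidableEq V] (hf : IsSuccOn A s f) (hw : w ∈ s) (huw : A u w) :
    IsSuccOn A s (Function.update f u w) := by
  intro v hv
  rcases eq_or_ne v u with rfl | hvu
  · simpa using ⟨hw, huw⟩
  · simpa [hvu] using hf v hv

lemma one_le_minOutDegOn_orbit (hf : IsSuccOn A s f) (hv : v ∈ s) :
    1 ≤ minOutDegOn A (s.filter fun u => ∃ n, f^[n] v = u) := by
  refine (one_le_minOutDegOn_iff_s18 ⟨v, mem_filter.mpr ⟨hv, 0, rfl⟩⟩).mpr fun u hu => ?_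
  obtain ⟨hus, n, rfl⟩ := mem_filter.mp hu
  refine ⟨f (f^[n] v), mem_filter.mpr ⟨(hf _ hus).1, n + 1, ?_⟩, (hf _ hus).2⟩
  exact Function.iterate_succ_apply' f n v

end IsSuccOn

namespace IsMinimalPC

variable [DecidableEq V] {A : V → V → Prop} {s : Finset V} {f : V → V} {u v w : V}

section

variable (hmin : IsMinimalPC A s) (hδ : minOutDegOn A s ≤ 1) (hf : IsSuccOn A s f)
include hmin hδ hf

lemma exists_iterate_eq (hv : v ∈ s) (hu : u ∈ s) : ∃ n, f^[n] v = u := by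
  have horbit : (s.filter fun u => ∃ n, f^[n] v = u) = s := by
    by_contra hne
    have := hmin.minOutDegOn_eq_zero_of_ssubset hδ ((filter_subset _ _).ssubset_of_ne hne)
    have := hf.one_le_minOutDegOn_orbit hv
    omega
  rw [← horbit] at hu
  exact (mem_filter.mp hu).2

lemma surjOn : Set.SurjOn f s s := by
  intro u hu
  obtain ⟨n, hn⟩ := hmin.exists_iterate_eq hδ hf (hf u hu).1 hu
  refine ⟨f^[n] u, hf.iterate_mem hu n, ?_⟩
  rw [← Function.iterate_succ_apply' f n u, Function.iterate_succ_apply, hn]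

lemma injOn : Set.InjOn f s :=
  Finset.injOn_of_surjOn_of_card_le f (fun v hv => (hf v hv).1) (hmin.surjOn hδ hf) le_rfl

lemma eq_of_arc (hu : u ∈ s) (hw : w ∈ s) (huw : A u w) : w = f u := by
  obtain ⟨y, hy, rfl⟩ := hmin.surjOn hδ hf hw
  by_contra hne
  have hyu : y ≠ u := by rintro rfl; exact hne rfl
  refine hyu (hmin.injOn hδ (hf.update (hf y hy).1 huw) hy hu ?_)
  simp [Function.update_of_ne hyu]

end

end IsMinimalPC

open Function in
lemma iterate_minimalPeriod_adj_iff {f : V → V} {u v w : V} (hv : v ∈ periodicPts f) :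
    [u, w] <:+: List.iterate f v (minimalPeriod f v) ∨
      ((List.iterate f v (minimalPeriod f v)).getLast? = some u ∧
        (List.iterate f v (minimalPeriod f v)).head? = some w) ↔
    u ∈ List.iterate f v (minimalPeriod f v) ∧ w = f u := by
  set p := minimalPeriod f v
  set l := List.iterate f v p
  have hp : 0 < p := minimalPeriod_pos_of_mem_periodicPts hv
  have hlen : l.length = p := List.length_iterate f v p
  have hget : ∀ i (h : i < l.length), l[i] = f^[i] v := List.getElem_iterate f v p
  have hlast : l.getLast? = some (f^[p - 1] v) := by
    rw [List.getLast?_eq_getElem?, List.getElem?_eq_getElem (by omega), hget, hlen]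
  have hhead : l.head? = some v := by
    rw [List.head?_eq_getElem?, List.getElem?_eq_getElem (by omega), hget]; rfl
  have hwrap : f (f^[p - 1] v) = v := by
    rw [← iterate_succ_apply' f (p - 1) v, Nat.succ_eq_add_one, Nat.sub_add_cancel hp]
    exact iterate_minimalPeriod
  have hchain : l.IsChain fun x y => y = f x := by
    refine List.isChain_iff_getElem.mpr fun i h => ?_
    rw [hget, hget, iterate_succ_apply']
  constructor
  · rintro (hinf | ⟨hu, hw⟩)
    · exact ⟨hinf.subset (List.mem_cons_self ..),
        (List.isChain_pair (R := fun x y => y = f x)).mp (hchain.infix hinf)⟩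
    · rw [hlast, Option.some_inj] at hu
      rw [hhead, Option.some_inj] at hw
      subst hu hw
      exact ⟨List.mem_iterate.mpr ⟨p - 1, by omega, rfl⟩, hwrap.symm⟩
  · rintro ⟨hu, rfl⟩
    obtain ⟨i, hi, rfl⟩ := List.mem_iterate.mp hu
    by_cases hi' : i + 1 < p
    · left
      have := List.isChain_iff_getElem.mp (List.isChain_isInfix l) i (by omega)
      rwa [hget, hget, iterate_succ_apply'] at this
    · right
      obtain rfl : i = p - 1 := by omega
      exact ⟨hlast, by rw [hhead, hwrap]⟩

open Function in
theorem IsMinimalPC.exists_chordless_cycle [DecidableEq V] {A : V → V → Prop} {s : Finset V}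
    (hmin : IsMinimalPC A s) (hδ : minOutDegOn A s = 1) :
    ∃ l : List V, l.Nodup ∧ l.toFinset = s ∧ ∀ u w, inducedRel A s u w ↔
      ([u, w] <:+: l ∨ (l.getLast? = some u ∧ l.head? = some w)) := by
  obtain ⟨v, hv⟩ := nonempty_of_minOutDegOn_ne_zero (hδ.trans_ne one_ne_zero)
  obtain ⟨f, hf⟩ := IsSuccOn.exists_of_one_le_minOutDegOn hδ.ge
  have hper : v ∈ periodicPts f := by
    obtain ⟨n, hn⟩ := hmin.exists_iterate_eq hδ.le hf (hf v hv).1 hv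
    exact mk_mem_periodicPts n.succ_pos (by rw [IsPeriodicPt, IsFixedPt, iterate_succ_apply, hn])
  set l := List.iterate f v (minimalPeriod f v)
  have hmem : ∀ u, u ∈ l ↔ u ∈ s := fun u => by
    refine ⟨fun hu => ?_, fun hu => ?_⟩
    · obtain ⟨n, -, rfl⟩ := List.mem_iterate.mp hu
      exact hf.iterate_mem hv n
    · obtain ⟨n, rfl⟩ := hmin.exists_iterate_eq hδ.le hf hv hu
      have hp := minimalPeriod_pos_of_mem_periodicPts hper
      exact List.mem_iterate.mpr
        ⟨n % minimalPeriod f v, Nat.mod_lt _ hp, iterate_mod_minimalPeriod_eq.symm⟩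
  refine ⟨l, ?_, ?_, fun u w => ?_⟩
  · refine List.nodup_iff_injective_get.mpr fun i j hij => Fin.ext ?_
    have hi := i.2
    have hj := j.2
    simp only [l, List.get_eq_getElem, List.getElem_iterate, List.length_iterate] at hij hi hj
    exact iterate_injOn_Iio_minimalPeriod hi hj hij
  · ext u
    rw [List.mem_toFinset, hmem]
  · rw [iterate_minimalPeriod_adj_iff hper, hmem]
    refine ⟨fun ⟨hu, hw, huw⟩ => ⟨hu, hmin.eq_of_arc hδ.le hf hu hw huw⟩, ?_⟩
    rintro ⟨hu, rfl⟩
    exact ⟨hu, hf u hu⟩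

namespace Finpartition

variable {α : Type*} [DecidableEq α] {s B : Finset α}

lemma sum_card_inter (P : Finpartition s) (hB : B ⊆ s) : ∑ p ∈ P.parts, #(p ∩ B) = #B := by
  rw [← (P.restrict hB).sum_card_parts, P.sum_restrict hB card card_empty]
  rfl

lemma two_mul_card_filter_two_le_card_inter (P : Finpartition s) (hB : B ⊆ s) :
    2 * #{p ∈ P.parts | 2 ≤ #(p ∩ B)} ≤ #B :=
  calc 2 * #{p ∈ P.parts | 2 ≤ #(p ∩ B)}
      = ∑ p ∈ P.parts with 2 ≤ #(p ∩ B), 2 := by rw [sum_const, smul_eq_mul, mul_comm]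
    _ ≤ ∑ p ∈ P.parts with 2 ≤ #(p ∩ B), #(p ∩ B) :=
        sum_le_sum fun p hp => (mem_filter.mp hp).2
    _ ≤ ∑ p ∈ P.parts, #(p ∩ B) := sum_le_sum_of_subset (filter_subset _ _)
    _ = #B := P.sum_card_inter hB

end Finpartition

section ClassA

variable {m : ℕ} {s p : Finset (Fin (3 * m))} {a b u v w x : Fin (3 * m)}

def blockIdx (m : ℕ) (v : Fin (3 * m)) : ℕ :=
  if v.val < 2 * m then v.val / 2 else v.val - 2 * m

lemma blockIdx_lt (v : Fin (3 * m)) : blockIdx m v < m := by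
  have := v.isLt
  unfold blockIdx
  split_ifs <;> omega

lemma classARel_iff : classARel m u v ↔ u ≠ v ∧ (2 * m ≤ u.val → v.val < 2 * m) ∧
    (blockIdx m u = blockIdx m v ↔ v.val < 2 * m) := by
  simp only [classARel, blockIdx, ne_eq, Fin.ext_iff]
  split_ifs <;> omega

lemma classARel.inner_of_outer (h : classARel m u v) (hu : 2 * m ≤ u.val) : v.val < 2 * m :=
  (classARel_iff.mp h).2.1 hu

lemma classARel.blockIdx_eq (h : classARel m u v) (hv : v.val < 2 * m) :
    blockIdx m u = blockIdx m v :=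
  (classARel_iff.mp h).2.2.mpr hv

lemma classARel.blockIdx_eq_of_outer (h : classARel m u v) (hu : 2 * m ≤ u.val) :
    blockIdx m v = blockIdx m u :=
  (h.blockIdx_eq (h.inner_of_outer hu)).symm

lemma classARel_of_blockIdx_eq (hu : u.val < 2 * m) (hv : v.val < 2 * m) (huv : u ≠ v)
    (h : blockIdx m u = blockIdx m v) : classARel m u v :=
  classARel_iff.mpr ⟨huv, by omega, iff_of_true h hv⟩

lemma outDegOn_le_two_of_outer (hx : 2 * m ≤ x.val) : outDegOn (classARel m) s x ≤ 2 := by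
  refine (card_le_card_of_injOn Fin.val (t := {2 * (x.val - 2 * m), 2 * (x.val - 2 * m) + 1})
    (fun w hw => ?_) Fin.val_injective.injOn).trans card_le_two
  have hxw := (mem_filter.mp hw).2
  have hw := hxw.inner_of_outer hx
  have hb := hxw.blockIdx_eq hw
  simp only [blockIdx, if_pos hw, if_neg (not_lt.mpr hx)] at hb
  simp only [coe_insert, coe_singleton, Set.mem_insert_iff, Set.mem_singleton_iff]
  omega

lemma card_inner_outNeighbours_le_one (ha : a.val < 2 * m) :
    #{w ∈ s | classARel m a w ∧ w.val < 2 * m} ≤ 1 := by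
  refine card_le_one.mpr fun u hu v hv => Fin.ext ?_
  obtain ⟨-, hau, hu⟩ := mem_filter.mp hu
  obtain ⟨-, hav, hv⟩ := mem_filter.mp hv
  have hbu := hau.blockIdx_eq hu
  have hbv := hav.blockIdx_eq hv
  have hnu := Fin.val_ne_of_ne (classARel_iff.mp hau).1
  have hnv := Fin.val_ne_of_ne (classARel_iff.mp hav).1
  simp only [blockIdx, if_pos ha, if_pos hu, if_pos hv] at hbu hbv
  omega

lemma outDegOn_le_one_of_inner (ha : a.val < 2 * m) (hs : ∀ w ∈ s, w.val < 2 * m) :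
    outDegOn (classARel m) s a ≤ 1 := by
  have hsame : {w ∈ s | classARel m a w} = {w ∈ s | classARel m a w ∧ w.val < 2 * m} :=
    filter_congr fun w hw => (and_iff_left (hs w hw)).symm
  rw [outDegOn, hsame]
  exact card_inner_outNeighbours_le_one ha

lemma exists_outer_arc_of_inner (ha : a.val < 2 * m) (h : 2 ≤ outDegOn (classARel m) s a) :
    ∃ w ∈ s, 2 * m ≤ w.val ∧ classARel m a w := by
  by_contra! H
  have hsame : {w ∈ s | classARel m a w} = {w ∈ s | classARel m a w ∧ w.val < 2 * m} :=
    filter_congr fun w hw =>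
      ⟨fun haw => ⟨haw, not_le.mp fun hwo => H w hw hwo haw⟩, And.left⟩
  rw [outDegOn, hsame] at h
  have := card_inner_outNeighbours_le_one (s := s) ha
  omega

lemma exists_pair_of_outer (h : 2 ≤ outDegOn (classARel m) s x) :
    ∃ a ∈ s, ∃ b ∈ s, a ≠ b ∧ classARel m x a ∧ classARel m x b := by
  obtain ⟨a, ha, b, hb, hab⟩ := one_lt_card.mp h
  exact ⟨a, (mem_filter.mp ha).1, b, (mem_filter.mp hb).1, hab, (mem_filter.mp ha).2,
    (mem_filter.mp hb).2⟩

lemma minOutDegOn_classARel_le_two (s : Finset (Fin (3 * m))) :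
    minOutDegOn (classARel m) s ≤ 2 := by
  rcases s.eq_empty_or_nonempty with rfl | ⟨a, ha⟩
  · simp [minOutDegOn_empty]
  by_cases hout : ∃ x ∈ s, 2 * m ≤ x.val
  · obtain ⟨x, hx, hxo⟩ := hout
    exact (minOutDegOn_le_outDegOn hx).trans (outDegOn_le_two_of_outer hxo)
  · push Not at hout
    exact (minOutDegOn_le_outDegOn ha).trans ((outDegOn_le_one_of_inner (hout a ha) hout).trans
      one_le_two)

lemma exists_outer_of_two_le_minOutDegOn (h : 2 ≤ minOutDegOn (classARel m) s) :
    ∃ x ∈ s, 2 * m ≤ x.val := by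
  by_contra! hs
  obtain ⟨a, ha⟩ := nonempty_of_minOutDegOn_ne_zero (A := classARel m) (s := s) (by omega)
  have := (minOutDegOn_le_outDegOn ha).trans (outDegOn_le_one_of_inner (hs a ha) hs)
  omega

lemma exists_outer_pair_of_two_le_minOutDegOn (h : 2 ≤ minOutDegOn (classARel m) s) :
    ∃ x ∈ s, ∃ y ∈ s,
      2 * m ≤ x.val ∧ 2 * m ≤ y.val ∧ blockIdx m x ≠ blockIdx m y := by
  obtain ⟨x, hx, hxo⟩ := exists_outer_of_two_le_minOutDegOn h
  obtain ⟨a, ha, -, -, -, hxa, -⟩ :=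
    exists_pair_of_outer (h.trans (minOutDegOn_le_outDegOn hx))
  have hai := hxa.inner_of_outer hxo
  obtain ⟨y, hy, hyo, hay⟩ :=
    exists_outer_arc_of_inner hai (h.trans (minOutDegOn_le_outDegOn ha))
  refine ⟨x, hx, y, hy, hxo, hyo, ?_⟩
  rw [hxa.blockIdx_eq hai]
  exact fun hb => (not_lt.mpr hyo) ((classARel_iff.mp hay).2.2.mp hb)

lemma one_le_minOutDegOn_pair_of_outer (hx : 2 * m ≤ x.val) (hxa : classARel m x a)
    (hxb : classARel m x b) (hab : a ≠ b) : 1 ≤ minOutDegOn (classARel m) {a, b} := by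
  have ha := hxa.inner_of_outer hx
  have hb := hxb.inner_of_outer hx
  have hblk : blockIdx m a = blockIdx m b :=
    (hxa.blockIdx_eq_of_outer hx).trans (hxb.blockIdx_eq_of_outer hx).symm
  refine (one_le_minOutDegOn_iff_s18 (insert_nonempty a {b})).mpr fun v hv => ?_
  rcases mem_insert.mp hv with rfl | hv
  · exact ⟨b, by simp, classARel_of_blockIdx_eq ha hb hab hblk⟩
  · obtain rfl := mem_singleton.mp hv
    exact ⟨a, by simp, classARel_of_blockIdx_eq hb ha hab.symm hblk.symm⟩

lemma IsMinimalPC.minOutDegOn_classARel_ne_two (hmin : IsMinimalPC (classARel m) s) :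
    minOutDegOn (classARel m) s ≠ 2 := by
  intro h
  obtain ⟨x, hx, y, hy, hxo, hyo, hxy⟩ := exists_outer_pair_of_two_le_minOutDegOn h.ge
  obtain ⟨a, ha, b, hb, hab, hxa, hxb⟩ :=
    exists_pair_of_outer (h.ge.trans (minOutDegOn_le_outDegOn hx))
  obtain ⟨c, hc, d, hd, hcd, hyc, hyd⟩ :=
    exists_pair_of_outer (h.ge.trans (minOutDegOn_le_outDegOn hy))
  have hdisj : Disjoint ({a, b} : Finset _) {c, d} := by
    refine disjoint_left.mpr fun z hz hz' => hxy ?_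
    have hxz : classARel m x z := by rcases mem_insert.mp hz with rfl | h <;> simp_all
    have hyz : classARel m y z := by rcases mem_insert.mp hz' with rfl | h <;> simp_all
    exact (hxz.blockIdx_eq_of_outer hxo).symm.trans (hyz.blockIdx_eq_of_outer hyo)
  have := hmin.add_lt (insert_nonempty a {b}) (insert_nonempty c {d}) hdisj
    (insert_subset ha (singleton_subset_iff.mpr hb))
    (insert_subset hc (singleton_subset_iff.mpr hd))
  have := one_le_minOutDegOn_pair_of_outer hxo hxa hxb hab
  have := one_le_minOutDegOn_pair_of_outer hyo hyc hyd hcd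
  omega

def block (m i : ℕ) : Finset (Fin (3 * m)) := {v | blockIdx m v = i}

lemma card_block_le_three (i : ℕ) : #(block m i) ≤ 3 := by
  refine (card_le_card_of_injOn Fin.val (t := {2 * i, 2 * i + 1, 2 * m + i})
    (fun v hv => ?_) Fin.val_injective.injOn).trans card_le_three
  have hv : blockIdx m v = i := (mem_filter.mp hv).2
  simp only [blockIdx] at hv
  simp only [coe_insert, coe_singleton, Set.mem_insert_iff, Set.mem_singleton_iff]
  split_ifs at hv <;> omega

def richBlocks (m : ℕ) (p : Finset (Fin (3 * m))) : Finset ℕ :=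
  {i ∈ range m | 2 ≤ #(p ∩ block m i)}

lemma blockIdx_mem_richBlocks (hu : u ∈ p) (hw : w ∈ p) (huw : u ≠ w)
    (h : blockIdx m u = blockIdx m w) : blockIdx m u ∈ richBlocks m p := by
  refine mem_filter.mpr ⟨mem_range.mpr (blockIdx_lt u), ?_⟩
  rw [← card_pair huw]
  refine card_le_card fun v hv => mem_inter.mpr ⟨?_, mem_filter.mpr ⟨mem_univ _, ?_⟩⟩ <;>
    rcases mem_insert.mp hv with rfl | hv <;> simp_all

lemma blockIdx_mem_richBlocks_of_outer (hδ : 1 ≤ minOutDegOn (classARel m) p) (hx : x ∈ p)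
    (hxo : 2 * m ≤ x.val) : blockIdx m x ∈ richBlocks m p := by
  obtain ⟨w, hw, hxw⟩ := exists_arc_of_one_le_minOutDegOn hδ hx
  exact blockIdx_mem_richBlocks hx hw (classARel_iff.mp hxw).1
    (hxw.blockIdx_eq_of_outer hxo).symm

lemma richBlocks_nonempty (hδ : 1 ≤ minOutDegOn (classARel m) p) :
    (richBlocks m p).Nonempty := by
  by_cases hout : ∃ x ∈ p, 2 * m ≤ x.val
  · obtain ⟨x, hx, hxo⟩ := hout
    exact ⟨_, blockIdx_mem_richBlocks_of_outer hδ hx hxo⟩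
  push Not at hout
  obtain ⟨u, hu⟩ := nonempty_of_minOutDegOn_ne_zero (A := classARel m) (s := p) (by omega)
  obtain ⟨w, hw, huw⟩ := exists_arc_of_one_le_minOutDegOn hδ hu
  exact ⟨_, blockIdx_mem_richBlocks hu hw (classARel_iff.mp huw).1
    (huw.blockIdx_eq (hout w hw))⟩

lemma minOutDegOn_le_card_richBlocks (p : Finset (Fin (3 * m))) :
    minOutDegOn (classARel m) p ≤ #(richBlocks m p) := by
  have hle := minOutDegOn_classARel_le_two p
  rcases Nat.lt_or_ge (minOutDegOn (classARel m) p) 2 with h | h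
  · rcases Nat.eq_zero_or_pos (minOutDegOn (classARel m) p) with h0 | h1
    · simp [h0]
    · exact (Nat.le_of_lt_succ h).trans (card_pos.mpr (richBlocks_nonempty h1))
  · obtain ⟨x, hx, y, hy, hxo, hyo, hxy⟩ := exists_outer_pair_of_two_le_minOutDegOn h
    calc minOutDegOn (classARel m) p ≤ #{blockIdx m x, blockIdx m y} := by
          rw [card_pair hxy]; exact hle
      _ ≤ #(richBlocks m p) := card_le_card (insert_subset
          (blockIdx_mem_richBlocks_of_outer (by omega) hx hxo)
          (singleton_subset_iff.mpr (blockIdx_mem_richBlocks_of_outer (by omega) hy hyo)))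

lemma sum_minOutDegOn_classARel_le (P : Finpartition (univ : Finset (Fin (3 * m)))) :
    ∑ p ∈ P.parts, minOutDegOn (classARel m) p ≤ m :=
  calc ∑ p ∈ P.parts, minOutDegOn (classARel m) p
      ≤ ∑ p ∈ P.parts, #(richBlocks m p) :=
        sum_le_sum fun p _ => minOutDegOn_le_card_richBlocks p
    _ = ∑ i ∈ range m, #{p ∈ P.parts | 2 ≤ #(p ∩ block m i)} := by
        simp only [richBlocks, card_filter]
        exact sum_comm
    _ ≤ ∑ i ∈ range m, 1 := sum_le_sum fun i _ => by
        have := P.two_mul_card_filter_two_le_card_inter (subset_univ (block m i))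
        have := card_block_le_three (m := m) i
        omega
    _ = m := by simp

end ClassA

theorem stmt18_general (K m : ℕ) (hm : K = 2 * m) :
    (∀ s : Finset (Fin (3 * m)), s.Nonempty → IsMinimalPC (classARel m) s →
      minOutDegOn (classARel m) s ≤ 2 ∧ minOutDegOn (classARel m) s ≠ 2 ∧
      (s.card = 1 ∨ ∃ l : List (Fin (3 * m)), l.Nodup ∧ l.toFinset = s ∧
        ∀ u v, inducedRel (classARel m) s u v ↔
          ([u, v] <:+: l ∨ (l.getLast? = some u ∧ l.head? = some v)))) ∧
    (∀ P : Finpartition (univ : Finset (Fin (3 * m))),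
      K ≤ ∑ s ∈ P.parts, (s.card - minOutDegOn (classARel m) s)) := by
  refine ⟨fun s hs hmin => ?_, fun P => ?_⟩
  · have hle := minOutDegOn_classARel_le_two s
    have hne := hmin.minOutDegOn_classARel_ne_two
    refine ⟨hle, hne, ?_⟩
    rcases eq_or_lt_of_le (Nat.one_le_iff_ne_zero.mpr hs.card_ne_zero) with h | h
    · exact Or.inl h.symm
    · have := hmin.one_le_minOutDegOn h
      exact Or.inr (hmin.exists_chordless_cycle (by omega))
  · have := sum_minOutDegOn_classARel_le P
    rw [sum_tsub_distrib _ fun p _ => minOutDegOn_le_card _ p, P.sum_card_parts, card_univ,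
      Fintype.card_fin]
    omega

/-- In the Class-A digraph: every minimal partial clique has minimum out-degree at most
2 and never exactly 2; hence each is a single vertex or a directed cycle, and every
partial-clique partition has total length at least K, i.e. ℓ_PC(D) ≥ K. -/
theorem stmt18 (K m : ℕ) (hm : K = 2 * m) (hK : 4 ≤ K) :
    (∀ s : Finset (Fin (3 * m)), s.Nonempty → IsMinimalPC (classARel m) s →
      minOutDegOn (classARel m) s ≤ 2 ∧ minOutDegOn (classARel m) s ≠ 2 ∧
      (s.card = 1 ∨ ∃ l : List (Fin (3 * m)), l.Nodup ∧ l.toFinset = s ∧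
        ∀ u v, inducedRel (classARel m) s u v ↔
          ([u, v] <:+: l ∨ (l.getLast? = some u ∧ l.head? = some v)))) ∧
    (∀ P : Finpartition (univ : Finset (Fin (3 * m))),
      K ≤ ∑ s ∈ P.parts, (s.card - minOutDegOn (classARel m) s)) :=
  stmt18_general K m hm
end
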